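/- Let ρ be a real number with 0 < ρ ≤ 1/2. Then there exists a unique α* ∈ (0, 1/2) such that 2·H(α*·ρ) = H(ρ); moreover 2·H(αρ) < H(ρ) for all α ∈ (0, α*) and 2·H(αρ) > H(ρ) for all α ∈ (α*, 1/2]. -/

import Mathlib

/-!
`H` is Mathlib's `Real.binEntropy`, and `α ↦ 2 H(αρ)` is continuous and strictly increasing on
`[0, 1/2]` because `αρ` stays in `[0, 1/2]`, where `H` increases. It vanishes at `α = 0`, and by
strict concavity `H(ρ/2) > H(ρ)/2`, so it exceeds `H(ρ)` at `α = 1/2`. The intermediate value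
theorem gives the root, and strict monotonicity gives its uniqueness and the sign pattern.
-/

open Set Real

theorem StrictMonoOn.existsUnique_mem_Ioo_eq {α δ : Type*} [ConditionallyCompleteLinearOrder α]
    [DenselyOrdered α] [TopologicalSpace α] [OrderTopology α] [LinearOrder δ]
    [TopologicalSpace δ] [OrderClosedTopology δ] {f : α → δ} {a b : α} {c : δ}
    (hmono : StrictMonoOn f (Icc a b)) (hcont : ContinuousOn f (Icc a b)) (hab : a ≤ b)
    (ha : f a < c) (hb : c < f b) : ∃! x, x ∈ Ioo a b ∧ f x = c := by
  obtain ⟨x, hx, hfx⟩ := intermediate_value_Ioo hab hcont ⟨ha, hb⟩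
  refine ⟨x, ⟨hx, hfx⟩, fun y ⟨hy, hfy⟩ => ?_⟩
  exact hmono.injOn (Ioo_subset_Icc_self hy) (Ioo_subset_Icc_self hx) (hfy.trans hfx.symm)

namespace Real

lemma binEntropy_eq_neg_mul_log_sub (x : ℝ) :
    binEntropy x = -x * log x - (1 - x) * log (1 - x) := by
  rw [binEntropy, log_inv, log_inv]
  ring

lemma strictMonoOn_binEntropy_mul_right {ρ : ℝ} (hρ₀ : 0 < ρ) (hρ₁ : ρ ≤ 1) :
    StrictMonoOn (fun α => binEntropy (α * ρ)) (Icc 0 (1 / 2)) := by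
  have maps : ∀ α ∈ Icc (0 : ℝ) (1 / 2), α * ρ ∈ Icc (0 : ℝ) 2⁻¹ := fun α ⟨h₀, h₁⟩ =>
    ⟨by positivity, by nlinarith⟩
  exact fun α hα β hβ hαβ =>
    binEntropy_strictMonoOn (maps α hα) (maps β hβ) (mul_lt_mul_of_pos_right hαβ hρ₀)

lemma binEntropy_lt_two_mul_binEntropy_half {ρ : ℝ} (hρ₀ : 0 < ρ) (hρ₁ : ρ ≤ 1) :
    binEntropy ρ < 2 * binEntropy (ρ / 2) := by
  have h := strictConcave_binEntropy.2 (left_mem_Icc.2 zero_le_one) ⟨hρ₀.le, hρ₁⟩ hρ₀.ne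
    (one_half_pos (α := ℝ)) one_half_pos (add_halves 1)
  simp only [smul_eq_mul, mul_zero, binEntropy_zero, zero_add] at h
  rw [one_div_mul_eq_div, one_div_mul_eq_div] at h
  linarith

end Real

/-- Fermi-system threshold: for `0 < ρ ≤ 1/2` there is a unique `α* ∈ (0, 1/2)` with
`2 H(α* ρ) = H(ρ)`; moreover `2 H(αρ) < H(ρ)` for `α ∈ (0, α*)` and
`2 H(αρ) > H(ρ)` for `α ∈ (α*, 1/2]`. -/
theorem stmt16 (ρ : ℝ) (h0 : 0 < ρ) (h1 : ρ ≤ 1 / 2)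
    (H : ℝ → ℝ) (hH : ∀ x, H x = -x * Real.log x - (1 - x) * Real.log (1 - x)) :
    (∃! a : ℝ, a ∈ Set.Ioo (0 : ℝ) (1 / 2) ∧ 2 * H (a * ρ) = H ρ) ∧
    (∀ a ∈ Set.Ioo (0 : ℝ) (1 / 2), 2 * H (a * ρ) = H ρ →
      (∀ α ∈ Set.Ioo (0 : ℝ) a, 2 * H (α * ρ) < H ρ) ∧
      (∀ α : ℝ, a < α → α ≤ 1 / 2 → H ρ < 2 * H (α * ρ))) := by
  obtain rfl : H = binEntropy :=
    funext fun x => (hH x).trans (binEntropy_eq_neg_mul_log_sub x).symm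
  have hρ₁ : ρ ≤ 1 := h1.trans (by norm_num)
  have hmono : StrictMonoOn (fun α => 2 * binEntropy (α * ρ)) (Icc 0 (1 / 2)) :=
    fun α hα β hβ hαβ => by
      simpa using (strictMonoOn_binEntropy_mul_right h0 hρ₁ hα hβ hαβ)
  have hcont : ContinuousOn (fun α => 2 * binEntropy (α * ρ)) (Icc 0 (1 / 2)) := by fun_prop
  have hpos : 0 < binEntropy ρ := binEntropy_pos h0 (h1.trans_lt (by norm_num))
  have hhalf : binEntropy ρ < 2 * binEntropy (1 / 2 * ρ) := by
    rw [one_div_mul_eq_div]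
    exact binEntropy_lt_two_mul_binEntropy_half h0 hρ₁
  refine ⟨hmono.existsUnique_mem_Ioo_eq hcont (by norm_num) (by simpa using hpos) hhalf,
    fun a ha hroot => ⟨fun α hα => ?_, fun α hα hα' => ?_⟩⟩
  · exact hroot ▸ hmono ⟨hα.1.le, hα.2.le.trans ha.2.le⟩ (Ioo_subset_Icc_self ha) hα.2
  · exact hroot ▸ hmono (Ioo_subset_Icc_self ha) ⟨ha.1.le.trans hα.le, hα'⟩ hα
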